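/- arXiv:2307.09747 — 14 statements merged into one kernel-verified Lean document; each statement's English description precedes it below -/
import Mathlib

section
/- Let u0 ∈ H and set w0 := C* u0. Suppose ŵ ∈ Fix T̃ is a nearest point of Fix T̃ to w0, i.e., ‖w0 − ŵ‖ ≤ ‖w0 − y‖ for all y ∈ Fix T̃. Set û := J (C ŵ). Then û ∈ Fix T and û is an M-projection of u0 onto Fix T, i.e., ‖C*(u0 − û)‖ ≤ ‖C*(u0 − x)‖ for all x ∈ Fix T. -/
open scoped RealInnerProductSpace

/-- If `ŵ ∈ Fix T̃` is a nearest point of `Fix T̃` to `w0 := C* u0`, then `û := J (C ŵ)`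
belongs to `Fix T` and is an `M`-projection of `u0` onto `Fix T`. -/
theorem stmt_2
    {H D : Type*} [NormedAddCommGroup H] [InnerProductSpace ℝ H] [CompleteSpace H]
    [NormedAddCommGroup D] [InnerProductSpace ℝ D] [CompleteSpace D]
    (C : D →L[ℝ] H) (J : H → H) (u0 : H) (what : D)
    (hfix : ContinuousLinearMap.adjoint C (J (C what)) = what)
    (hnear : ∀ y : D, ContinuousLinearMap.adjoint C (J (C y)) = y →
      ‖ContinuousLinearMap.adjoint C u0 - what‖ ≤ ‖ContinuousLinearMap.adjoint C u0 - y‖) :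
    J (C (ContinuousLinearMap.adjoint C (J (C what)))) = J (C what) ∧
      ∀ x : H, J (C (ContinuousLinearMap.adjoint C x)) = x →
        ‖ContinuousLinearMap.adjoint C (u0 - J (C what))‖ ≤
          ‖ContinuousLinearMap.adjoint C (u0 - x)‖ := by
  refine ⟨by rw [hfix], fun x hx => ?_⟩
  have hy : ContinuousLinearMap.adjoint C (J (C (ContinuousLinearMap.adjoint C x)))
      = ContinuousLinearMap.adjoint C x := by rw [hx]
  have := hnear _ hy
  simpa [map_sub, hfix] using this
end

section
/- Let u0 ∈ H and set w0 := C* u0. Suppose û ∈ Fix T is an M-projection of u0 onto Fix T, i.e., ‖C*(u0 − û)‖ ≤ ‖C*(u0 − x)‖ for all x ∈ Fix T. Then ŵ := C* û belongs to Fix T̃ and is a nearest point of Fix T̃ to w0, i.e., ‖w0 − ŵ‖ ≤ ‖w0 − y‖ for all y ∈ Fix T̃. -/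
open scoped RealInnerProductSpace

/-- If `û ∈ Fix T` is an `M`-projection of `u0` onto `Fix T`, then `ŵ := C* û` belongs to
`Fix T̃` and is a nearest point of `Fix T̃` to `w0 := C* u0`. -/
theorem stmt_3
    {H D : Type*} [NormedAddCommGroup H] [InnerProductSpace ℝ H] [CompleteSpace H]
    [NormedAddCommGroup D] [InnerProductSpace ℝ D] [CompleteSpace D]
    (C : D →L[ℝ] H) (J : H → H) (u0 : H) (uhat : H)
    (hfix : J (C (ContinuousLinearMap.adjoint C uhat)) = uhat)
    (hproj : ∀ x : H, J (C (ContinuousLinearMap.adjoint C x)) = x →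
      ‖ContinuousLinearMap.adjoint C (u0 - uhat)‖ ≤ ‖ContinuousLinearMap.adjoint C (u0 - x)‖) :
    ContinuousLinearMap.adjoint C (J (C (ContinuousLinearMap.adjoint C uhat)))
        = ContinuousLinearMap.adjoint C uhat ∧
      ∀ y : D, ContinuousLinearMap.adjoint C (J (C y)) = y →
        ‖ContinuousLinearMap.adjoint C u0 - ContinuousLinearMap.adjoint C uhat‖ ≤
          ‖ContinuousLinearMap.adjoint C u0 - y‖ := by
  constructor
  · rw [hfix]
  · intro y hy
    set x := J (C y) with hx
    have hxy : ContinuousLinearMap.adjoint C x = y := hy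
    have hfixx : J (C (ContinuousLinearMap.adjoint C x)) = x := by rw [hxy]
    have := hproj x hfixx
    simpa [map_sub, hxy] using this
end

section
/- Suppose that T̃ is firmly nonexpansive. Let u0 ∈ H, and suppose û₁ ∈ Fix T and û₂ ∈ Fix T are both M-projections of u0 onto Fix T, i.e., for i ∈ {1,2}, ‖C*(u0 − ûᵢ)‖ ≤ ‖C*(u0 − x)‖ for all x ∈ Fix T. Then û₁ = û₂. -/
open scoped RealInnerProductSpace
open Function

/-! With `F := C* ∘ J ∘ C`, the map `C*` sends `Fix T` onto `Fix F`, and `J ∘ C` sends it back.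
A firmly nonexpansive `F` is `1`-Lipschitz, so in the strictly convex space `D` the midpoint of two
fixed points of `F` is again fixed. Hence `C* û₁` and `C* û₂` are two nearest points to `C* u0` in a
midpoint-closed set, which by strict convexity coincide; applying `J ∘ C` gives `û₁ = û₂`. -/

def FirmlyNonexpansive {E : Type*} [NormedAddCommGroup E] [InnerProductSpace ℝ E]
    (F : E → E) : Prop :=
  ∀ v w, ‖F v - F w‖ ^ 2 ≤ ⟪v - w, F v - F w⟫

theorem FirmlyNonexpansive.lipschitzWith {E : Type*} [NormedAddCommGroup E]
    [InnerProductSpace ℝ E] {F : E → E} (hF : FirmlyNonexpansive F) : LipschitzWith 1 F := by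
  refine LipschitzWith.of_dist_le_mul fun v w => ?_
  rw [NNReal.coe_one, one_mul, dist_eq_norm, dist_eq_norm]
  have h := (hF v w).trans (real_inner_le_norm _ _)
  nlinarith [norm_nonneg (F v - F w), norm_nonneg (v - w)]

section StrictConvex

variable {V : Type*} [NormedAddCommGroup V] [NormedSpace ℝ V] [StrictConvexSpace ℝ V]

theorem LipschitzWith.isFixedPt_midpoint {P : Type*} [MetricSpace P]
    [NormedAddTorsor V P] {f : P → P} (hf : LipschitzWith 1 f) {x y : P}
    (hx : IsFixedPt f x) (hy : IsFixedPt f y) : IsFixedPt f (midpoint ℝ x y) := by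
  set m := midpoint ℝ x y
  have hxm : dist x (f m) ≤ dist x y / 2 := by
    calc dist x (f m) = dist (f x) (f m) := by rw [hx]
      _ ≤ dist x m := hf.dist_le_mul_of_le le_rfl |>.trans_eq (one_mul _)
      _ = dist x y / 2 := by simp [m, dist_left_midpoint, div_eq_inv_mul]
  have hmy : dist (f m) y ≤ dist x y / 2 := by
    calc dist (f m) y = dist (f m) (f y) := by rw [hy]
      _ ≤ dist m y := hf.dist_le_mul_of_le le_rfl |>.trans_eq (one_mul _)
      _ = dist x y / 2 := by simp [m, dist_midpoint_right, div_eq_inv_mul]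
  have htri := dist_triangle x (f m) y
  exact eq_midpoint_of_dist_eq_half (by linarith) (by linarith)

theorem eq_of_norm_sub_eq_of_norm_sub_le_norm_sub_midpoint {p x y : V}
    (hxy : ‖p - x‖ = ‖p - y‖) (hmid : ‖p - x‖ ≤ ‖p - midpoint ℝ x y‖) : x = y := by
  by_contra hne
  have hsplit : p - midpoint ℝ x y = (1 / 2 : ℝ) • ((p - x) + (p - y)) := by
    rw [midpoint_eq_smul_add, invOf_eq_inv]
    module
  have hlt := (norm_midpoint_lt_iff hxy).2 fun h => hne (sub_right_injective h)
  rw [← hsplit] at hlt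
  exact hlt.not_ge hmid

end StrictConvex

/-- If `T̃ = C* ∘ J ∘ C` is firmly nonexpansive, then `M`-projections of `u0` onto `Fix T`
are unique. -/
theorem stmt_4
    {H D : Type*} [NormedAddCommGroup H] [InnerProductSpace ℝ H] [CompleteSpace H]
    [NormedAddCommGroup D] [InnerProductSpace ℝ D] [CompleteSpace D]
    (C : D →L[ℝ] H) (J : H → H)
    (hfne : ∀ v w : D,
      ‖ContinuousLinearMap.adjoint C (J (C v)) - ContinuousLinearMap.adjoint C (J (C w))‖ ^ 2 ≤
        ⟪v - w, ContinuousLinearMap.adjoint C (J (C v)) -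
          ContinuousLinearMap.adjoint C (J (C w))⟫)
    (u0 u1 u2 : H)
    (h1fix : J (C (ContinuousLinearMap.adjoint C u1)) = u1)
    (h2fix : J (C (ContinuousLinearMap.adjoint C u2)) = u2)
    (h1 : ∀ x : H, J (C (ContinuousLinearMap.adjoint C x)) = x →
      ‖ContinuousLinearMap.adjoint C (u0 - u1)‖ ≤ ‖ContinuousLinearMap.adjoint C (u0 - x)‖)
    (h2 : ∀ x : H, J (C (ContinuousLinearMap.adjoint C x)) = x →
      ‖ContinuousLinearMap.adjoint C (u0 - u2)‖ ≤ ‖ContinuousLinearMap.adjoint C (u0 - x)‖) :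
    u1 = u2 := by
  set A := ContinuousLinearMap.adjoint C
  set F : D → D := fun w => A (J (C w))
  have hfix1 : IsFixedPt F (A u1) := by simp only [IsFixedPt, F, h1fix]
  have hfix2 : IsFixedPt F (A u2) := by simp only [IsFixedPt, F, h2fix]
  set m := midpoint ℝ (A u1) (A u2)
  have hm : A (J (C m)) = m :=
    (FirmlyNonexpansive.lipschitzWith hfne).isFixedPt_midpoint hfix1 hfix2
  have hm_lift : J (C (A (J (C m)))) = J (C m) := by rw [hm]
  have hA : A u1 = A u2 := by
    refine eq_of_norm_sub_eq_of_norm_sub_le_norm_sub_midpoint (p := A u0) ?_ ?_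
    · simpa only [map_sub] using le_antisymm (h1 u2 h2fix) (h2 u1 h1fix)
    · simpa only [map_sub, hm] using h1 _ hm_lift
  rw [← h1fix, ← h2fix, hA]
end

section
/- Let D be a real Hilbert space, let T̃ : D → D be firmly nonexpansive, and suppose Fix T̃ := {w : T̃ w = w} is nonempty and affine, i.e., a + t·(b − a) ∈ Fix T̃ for all a, b ∈ Fix T̃ and t ∈ ℝ. Let (λ_k) be a sequence in [0,2], let w0 ∈ D, and define w_{k+1} := (1 − λ_k)·w_k + λ_k·T̃(w_k). If (w_k) converges weakly to a point w* ∈ Fix T̃ (i.e., ⟪w_k, v⟫ → ⟪w*, v⟫ for every v ∈ D), then w* is the nearest point of Fix T̃ to w0: ‖w0 − w*‖ ≤ ‖w0 − y‖ for all y ∈ Fix T̃. -/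
open scoped RealInnerProductSpace

/-- If `T̃` is firmly nonexpansive with nonempty affine fixed point set, and the relaxed
iteration `w_{k+1} = (1 - λ_k) w_k + λ_k T̃ w_k` (with `λ_k ∈ [0,2]`) converges weakly to a
fixed point `w*`, then `w*` is the nearest point of `Fix T̃` to `w0`. -/
theorem stmt_5
    {D : Type*} [NormedAddCommGroup D] [InnerProductSpace ℝ D] [CompleteSpace D]
    (T : D → D)
    (hfne : ∀ v w : D, ‖T v - T w‖ ^ 2 ≤ ⟪v - w, T v - T w⟫)
    (hne : ∃ a : D, T a = a)
    (haff : ∀ a b : D, T a = a → T b = b → ∀ t : ℝ,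
      T (a + t • (b - a)) = a + t • (b - a))
    (lam : ℕ → ℝ) (hlam : ∀ k, lam k ∈ Set.Icc (0 : ℝ) 2)
    (w0 : D) (w : ℕ → D) (hw0 : w 0 = w0)
    (hrec : ∀ k, w (k + 1) = (1 - lam k) • w k + lam k • T (w k))
    (wstar : D) (hfix : T wstar = wstar)
    (hweak : ∀ v : D, Filter.Tendsto (fun k => ⟪w k, v⟫) Filter.atTop (nhds ⟪wstar, v⟫)) :
    ∀ y : D, T y = y → ‖w0 - wstar‖ ≤ ‖w0 - y‖ := by
  intro y hy
  -- Step 1: for any fixed point c, ⟪v - T v, T v - c⟫ ≥ 0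
  have h1 : ∀ v c : D, T c = c → 0 ≤ ⟪v - T v, T v - c⟫ := by
    intro v c hc
    have := hfne v c
    rw [hc] at this
    have hid : ⟪v - T v, T v - c⟫ = ⟪v - c, T v - c⟫ - ⟪T v - c, T v - c⟫ := by
      rw [← inner_sub_left]; congr 1; abel
    rw [hid, real_inner_self_eq_norm_sq]
    linarith
  -- Step 2: v - T v is orthogonal to differences of fixed points
  have h2 : ∀ v a b : D, T a = a → T b = b → ⟪v - T v, b - a⟫ = 0 := by
    intro v a b ha hb
    by_contra hB
    set B := ⟪v - T v, b - a⟫ with hBdef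
    set A := ⟪v - T v, T v - a⟫ with hAdef
    have key : ∀ t : ℝ, 0 ≤ A - t * B := by
      intro t
      have := h1 v (a + t • (b - a)) (haff a b ha hb t)
      have hid : ⟪v - T v, T v - (a + t • (b - a))⟫ = A - t * B := by
        simp only [hAdef, hBdef]
        rw [show T v - (a + t • (b - a)) = (T v - a) - t • (b - a) by abel,
          inner_sub_right, inner_smul_right]
      linarith [hid ▸ this]
    have := key ((A + 1) / B)
    rw [div_mul_cancel₀ _ hB] at this
    linarith
  -- Step 3: ⟪w k - w 0, b - a⟫ = 0 for fixed a b
  have h3 : ∀ k : ℕ, ⟪w k - w 0, y - wstar⟫ = 0 := by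
    intro k
    induction k with
    | zero => simp
    | succ n ih =>
      have hstep : w (n + 1) - w n = lam n • (T (w n) - w n) := by
        rw [hrec n]; module
      have : ⟪w (n + 1) - w n, y - wstar⟫ = 0 := by
        rw [hstep, inner_smul_left]
        have : ⟪T (w n) - w n, y - wstar⟫ = 0 := by
          have := h2 (w n) wstar y hfix hy
          rw [show T (w n) - w n = -(w n - T (w n)) by abel, inner_neg_left, this]
          ring
        simp [this]
      calc ⟪w (n + 1) - w 0, y - wstar⟫
          = ⟪w (n + 1) - w n, y - wstar⟫ + ⟪w n - w 0, y - wstar⟫ := by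
            rw [← inner_add_left]; congr 1; abel
        _ = 0 := by rw [this, ih]; ring
  -- Step 4: pass to the weak limit
  have h4 : ⟪w0 - wstar, y - wstar⟫ = 0 := by
    have hconst : ∀ k, ⟪w k, y - wstar⟫ = ⟪w0, y - wstar⟫ := by
      intro k
      have := h3 k
      rw [inner_sub_left, hw0] at this
      linarith
    have hlim := hweak (y - wstar)
    have : Filter.Tendsto (fun _ : ℕ => ⟪w0, y - wstar⟫) Filter.atTop
        (nhds ⟪wstar, y - wstar⟫) := by
      simpa [hconst] using hlim
    have heq : ⟪w0, y - wstar⟫ = ⟪wstar, y - wstar⟫ :=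
      tendsto_nhds_unique tendsto_const_nhds this
    rw [inner_sub_left, heq]; ring
  -- Step 5: Pythagoras
  have h5 : ‖w0 - y‖ ^ 2 = ‖w0 - wstar‖ ^ 2 + ‖wstar - y‖ ^ 2 := by
    have hd : w0 - y = (w0 - wstar) + (wstar - y) := by abel
    rw [hd, ← real_inner_self_eq_norm_sq, ← real_inner_self_eq_norm_sq,
      ← real_inner_self_eq_norm_sq, inner_add_add_self]
    have : ⟪w0 - wstar, wstar - y⟫ = 0 := by
      rw [show wstar - y = -(y - wstar) by abel, inner_neg_right, h4]; ring
    have h6 : ⟪wstar - y, w0 - wstar⟫ = 0 := by rw [real_inner_comm]; exact this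
    linarith
  have := norm_nonneg (w0 - y)
  nlinarith [norm_nonneg (w0 - wstar), sq_nonneg ‖wstar - y‖]
end

section
/- Let S be a nonempty subset of H. Suppose that for every d ∈ D the set Π_{C*(S)}(d) contains at most one element, and that for every s ∈ S one has (s + ker C*) ∩ S = {s}. Then for every h ∈ H the set Π_S^M(h) contains at most one element. -/
open scoped RealInnerProductSpace

/-- If the metric projection onto `C*(S)` is at most singleton-valued, and
`(s + ker C*) ∩ S = {s}` for every `s ∈ S`, then the `M`-seminorm projection onto `S` is at
most singleton-valued. -/
theorem stmt_8
    {H D : Type*} [NormedAddCommGroup H] [InnerProductSpace ℝ H] [CompleteSpace H]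
    [NormedAddCommGroup D] [InnerProductSpace ℝ D] [CompleteSpace D]
    (C : D →L[ℝ] H) (S : Set H) (hS : S.Nonempty)
    (hD : ∀ d : D, Set.Subsingleton {r ∈ ⇑(ContinuousLinearMap.adjoint C) '' S |
      ∀ r' ∈ ⇑(ContinuousLinearMap.adjoint C) '' S, ‖d - r‖ ≤ ‖d - r'‖})
    (hker : ∀ s ∈ S, ∀ s' ∈ S,
      ContinuousLinearMap.adjoint C s' = ContinuousLinearMap.adjoint C s → s' = s) :
    ∀ h : H, Set.Subsingleton {s ∈ S | ∀ s' ∈ S,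
      ‖ContinuousLinearMap.adjoint C (h - s)‖ ≤ ‖ContinuousLinearMap.adjoint C (h - s')‖} := by
  intro h s₁ hs₁ s₂ hs₂
  obtain ⟨hs₁S, hmin₁⟩ := hs₁
  obtain ⟨hs₂S, hmin₂⟩ := hs₂
  set A := ContinuousLinearMap.adjoint C
  have key : ∀ s ∈ S, (∀ s' ∈ S, ‖A (h - s)‖ ≤ ‖A (h - s')‖) →
      A s ∈ {r ∈ ⇑A '' S | ∀ r' ∈ ⇑A '' S, ‖A h - r‖ ≤ ‖A h - r'‖} := by
    intro s hsS hmin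
    refine ⟨⟨s, hsS, rfl⟩, ?_⟩
    rintro r' ⟨s', hs'S, rfl⟩
    have := hmin s' hs'S
    simpa [map_sub] using this
  have h12 : A s₁ = A s₂ := hD (A h) (key s₁ hs₁S hmin₁) (key s₂ hs₂S hmin₂)
  exact hker s₂ hs₂S s₁ hs₁S h12
end

section
/- Let D be a real Hilbert space and let T̃ : D → D be a continuous ℝ-linear operator that is firmly nonexpansive. Let λ ∈ (0,2) be a constant, let w0 ∈ D, and define w_{k+1} := (1 − λ)·w_k + λ·T̃(w_k). Then Fix T̃ = ker(T̃ − Id) is a closed linear subspace of D, and (w_k) converges strongly (in norm) to the orthogonal projection of w0 onto Fix T̃. -/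
open scoped RealInnerProductSpace
open Filter Topology

/-!
For linear `T`, firm nonexpansiveness is `‖T v‖² ≤ ⟪v, T v⟫`, and the relaxed operator
`S = (1 - λ) + λ T` then satisfies `‖S v‖² + λ (2 - λ) ‖T v - v‖² ≤ ‖v‖²`. Along every orbit the
squared norms therefore decrease by square-summable amounts, so the residuals
`(T - 1) Sⁿ u = Sⁿ (T - 1) u` tend to `0`. As `‖S‖ ≤ 1`, the convergence `Sⁿ y → 0` passes from the
range of `T - 1` to its closure, which is the orthogonal complement of `Fix T`: a vector
orthogonal to that range has `⟪T x, x⟫ = ‖x‖²`, and `‖T x‖ ≤ ‖x‖` forces `T x = x`. Finally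
`w₀ - P w₀` lies in this complement while `P w₀` is fixed by `S`.
-/

theorem summable_of_succ_add_le {a b : ℕ → ℝ} (ha : ∀ n, 0 ≤ a n) (hb : ∀ n, 0 ≤ b n)
    (h : ∀ n, a (n + 1) + b n ≤ a n) : Summable b := by
  have hpartial : ∀ n, ∑ i ∈ Finset.range n, b i + a n ≤ a 0 := by
    intro n
    induction n with
    | zero => simp
    | succ n ih => rw [Finset.sum_range_succ]; linarith [h n]
  exact summable_of_sum_range_le hb fun n => by linarith [hpartial n, ha n]

namespace ContinuousLinearMap

section Normed

variable {𝕜 E : Type*} [NontriviallyNormedField 𝕜] [NormedAddCommGroup E] [NormedSpace 𝕜 E]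

theorem tendsto_pow_apply_zero_of_mem_closure_range {S A : E →L[𝕜] E} (hS : ‖S‖ ≤ 1)
    (hA : ∀ u, Tendsto (fun n => (S ^ n) (A u)) atTop (𝓝 0)) {x : E}
    (hx : x ∈ closure (Set.range A)) : Tendsto (fun n => (S ^ n) x) atTop (𝓝 0) := by
  have hlip : ∀ n, LipschitzWith 1 ⇑(S ^ n) := fun n => by
    simpa [FunLike.coe_pow_eq_iterate] using
      (S.lipschitzWith_of_opNorm_le (K := 1) (by simpa using hS)).iterate n
  have hclosed : IsClosed {x | Tendsto (fun n => (S ^ n) x) atTop (𝓝 0)} :=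
    (LipschitzWith.uniformEquicontinuous _ 1 hlip).equicontinuous.isClosed_setOfPred_tendsto
      continuous_const
  exact closure_minimal (Set.range_subset_iff.2 hA) hclosed hx

end Normed

section InnerProduct

variable {𝕜 E : Type*} [RCLike 𝕜] [NormedAddCommGroup E] [InnerProductSpace 𝕜 E] [CompleteSpace E]

theorem orthogonal_ker_sub_one_le_closure_range {T : E →L[𝕜] E} (hT : ‖T‖ ≤ 1) :
    (LinearMap.ker ((T - 1 : E →L[𝕜] E) : E →ₗ[𝕜] E))ᗮ ≤
      (LinearMap.range ((T - 1 : E →L[𝕜] E) : E →ₗ[𝕜] E)).topologicalClosure := by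
  rw [← Submodule.orthogonal_orthogonal_eq_closure]
  refine Submodule.orthogonal_le fun x hx => ?_
  have hTx : ∀ y, inner 𝕜 (T y) x = inner 𝕜 y x := by
    simpa [Submodule.mem_orthogonal, inner_sub_left, sub_eq_zero] using hx
  have : T x = x := eq_of_norm_le_re_inner_eq_norm_sq (𝕜 := 𝕜)
    (by simpa using T.le_of_opNorm_le hT x) (by simp [hTx])
  simp [this]

end InnerProduct

end ContinuousLinearMap

section Relaxation

variable {D : Type*} [NormedAddCommGroup D] [InnerProductSpace ℝ D]

theorem norm_sub_smul_add_smul_sq_add_le {v t : D} (ht : ‖t‖ ^ 2 ≤ ⟪v, t⟫) {lam : ℝ}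
    (hlam : 0 ≤ lam) :
    ‖(1 - lam) • v + lam • t‖ ^ 2 + lam * (2 - lam) * ‖t - v‖ ^ 2 ≤ ‖v‖ ^ 2 := by
  have hexpand : ‖(1 - lam) • v + lam • t‖ ^ 2 + lam * (2 - lam) * ‖t - v‖ ^ 2 =
      ‖v‖ ^ 2 - 2 * lam * (⟪v, t⟫ - ‖t‖ ^ 2) := by
    rw [norm_add_sq_real, norm_sub_sq_real, norm_smul, norm_smul, real_inner_smul_left,
      real_inner_smul_right, real_inner_comm t v, mul_pow, mul_pow, Real.norm_eq_abs,
      Real.norm_eq_abs, sq_abs, sq_abs]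
    ring
  nlinarith

theorem norm_le_of_sq_norm_le_inner {v t : D} (ht : ‖t‖ ^ 2 ≤ ⟪v, t⟫) : ‖t‖ ≤ ‖v‖ := by
  nlinarith [real_inner_le_norm v t, norm_nonneg t, norm_nonneg v]

variable {T : D →L[ℝ] D} {lam : ℝ}

def relaxation (lam : ℝ) (T : D →L[ℝ] D) : D →L[ℝ] D := (1 - lam) • 1 + lam • T

@[simp]
theorem relaxation_apply (v : D) : relaxation lam T v = (1 - lam) • v + lam • T v := rfl

theorem commute_relaxation : Commute (relaxation lam T) T :=
  ((Commute.one_left T).smul_left _).add_left ((Commute.refl T).smul_left _)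

theorem relaxation_apply_eq_self {x : D} (hx : T x = x) : relaxation lam T x = x := by
  rw [relaxation_apply, hx, ← add_smul, sub_add_cancel, one_smul]

theorem norm_relaxation_le_one (hT : ∀ v, ‖T v‖ ^ 2 ≤ ⟪v, T v⟫) (h0 : 0 ≤ lam) (h2 : lam ≤ 2) :
    ‖relaxation lam T‖ ≤ 1 := by
  refine ContinuousLinearMap.opNorm_le_bound _ zero_le_one fun v => ?_
  rw [one_mul, relaxation_apply]
  have hc : 0 ≤ lam * (2 - lam) * ‖T v - v‖ ^ 2 :=
    mul_nonneg (mul_nonneg h0 (sub_nonneg.2 h2)) (sq_nonneg _)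
  exact (pow_le_pow_iff_left₀ (norm_nonneg _) (norm_nonneg _) two_ne_zero).1
    (by linarith [norm_sub_smul_add_smul_sq_add_le (hT v) h0])

theorem tendsto_sub_one_apply_pow_relaxation (hT : ∀ v, ‖T v‖ ^ 2 ≤ ⟪v, T v⟫) (h0 : 0 < lam)
    (h2 : lam < 2) (u : D) :
    Tendsto (fun n => (T - 1) ((relaxation lam T ^ n) u)) atTop (𝓝 0) := by
  set S := relaxation lam T
  have hc : 0 < lam * (2 - lam) := mul_pos h0 (by linarith)
  have hsum : Summable fun n => lam * (2 - lam) * ‖(T - 1) ((S ^ n) u)‖ ^ 2 := by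
    refine summable_of_succ_add_le (a := fun n => ‖(S ^ n) u‖ ^ 2) (fun n => by positivity)
      (fun n => by positivity) fun n => ?_
    have := norm_sub_smul_add_smul_sq_add_le (hT ((S ^ n) u)) h0.le
    rwa [pow_succ' S n, mul_apply_eq_comp, sub_apply, one_apply_eq_self, relaxation_apply]
  have hsq : Tendsto (fun n => ‖(T - 1) ((S ^ n) u)‖ ^ 2) atTop (𝓝 0) := by
    simpa [hc.ne'] using hsum.tendsto_atTop_zero.div_const (lam * (2 - lam))
  rw [tendsto_zero_iff_norm_tendsto_zero]
  simpa using hsq.sqrt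

theorem tendsto_pow_relaxation_apply [CompleteSpace D] (hT : ∀ v, ‖T v‖ ^ 2 ≤ ⟪v, T v⟫)
    (h0 : 0 < lam) (h2 : lam < 2) (x : D) :
    Tendsto (fun n => (relaxation lam T ^ n) x) atTop
      (𝓝 ((LinearMap.ker ((T - 1 : D →L[ℝ] D) : D →ₗ[ℝ] D)).orthogonalProjectionOnto x)) := by
  set S := relaxation lam T
  set K := LinearMap.ker ((T - 1 : D →L[ℝ] D) : D →ₗ[ℝ] D)
  set p : D := ↑(K.orthogonalProjectionOnto x)
  have hTp : T p = p := sub_eq_zero.1 (K.orthogonalProjectionOnto x).2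
  have hT1 : ‖T‖ ≤ 1 := T.opNorm_le_bound zero_le_one fun v => by
    simpa using norm_le_of_sq_norm_le_inner (hT v)
  have hcomm : ∀ n u, (S ^ n) ((T - 1 : D →L[ℝ] D) u) = (T - 1 : D →L[ℝ] D) ((S ^ n) u) :=
    fun n u => by
      rw [← mul_apply_eq_comp, ((commute_relaxation.sub_right (Commute.one_right _)).pow_left n).eq,
        mul_apply_eq_comp]
  have hres : x - p ∈ closure (Set.range (T - 1 : D →L[ℝ] D)) := by
    have := T.orthogonal_ker_sub_one_le_closure_range hT1 (K.sub_starProjection_mem_orthogonal x)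
    rw [← SetLike.mem_coe, Submodule.topologicalClosure_coe, LinearMap.coe_range] at this
    exact this
  have hlim := ContinuousLinearMap.tendsto_pow_apply_zero_of_mem_closure_range
    (norm_relaxation_le_one hT h0.le h2.le)
    (fun u => (tendsto_sub_one_apply_pow_relaxation hT h0 h2 u).congr fun n => (hcomm n u).symm)
    hres
  have hsplit : ∀ n, (S ^ n) x = p + (S ^ n) (x - p) := fun n => by
    rw [map_sub, FunLike.coe_pow_eq_iterate, Function.iterate_fixed (relaxation_apply_eq_self hTp)]
    abel
  simpa [hsplit] using tendsto_const_nhds.add hlim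

end Relaxation

/-- If `T̃` is a continuous linear firmly nonexpansive operator on a real Hilbert space and
`λ ∈ (0,2)`, then `Fix T̃ = ker (T̃ - Id)` is a closed subspace and the relaxed iterates
`w_{k+1} = (1-λ) w_k + λ T̃ w_k` converge strongly to the orthogonal projection of `w0`
onto `Fix T̃`. -/
theorem stmt_9
    {D : Type*} [NormedAddCommGroup D] [InnerProductSpace ℝ D] [CompleteSpace D]
    (T : D →L[ℝ] D)
    (hfne : ∀ v w : D, ‖T v - T w‖ ^ 2 ≤ ⟪v - w, T v - T w⟫)
    (lam : ℝ) (hlam : lam ∈ Set.Ioo (0 : ℝ) 2)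
    (w0 : D) (w : ℕ → D) (hw0 : w 0 = w0)
    (hrec : ∀ k, w (k + 1) = (1 - lam) • w k + lam • T (w k)) :
    {x : D | T x = x} = (LinearMap.ker ((T - ContinuousLinearMap.id ℝ D : D →L[ℝ] D) : D →ₗ[ℝ] D) : Set D) ∧
      IsClosed ((LinearMap.ker ((T - ContinuousLinearMap.id ℝ D : D →L[ℝ] D) : D →ₗ[ℝ] D) : Submodule ℝ D) : Set D) ∧
      Filter.Tendsto w Filter.atTop
        (nhds (Submodule.orthogonalProjectionOnto (LinearMap.ker ((T - ContinuousLinearMap.id ℝ D : D →L[ℝ] D) : D →ₗ[ℝ] D)) w0 : D)) := by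
  have hT : ∀ v, ‖T v‖ ^ 2 ≤ ⟪v, T v⟫ := fun v => by simpa using hfne v 0
  have hw : ∀ n, w n = (relaxation lam T ^ n) w0 := fun n => by
    induction n with
    | zero => simp [hw0]
    | succ n ih => rw [hrec, ih, pow_succ', mul_apply_eq_comp, relaxation_apply]
  refine ⟨?_, (T - ContinuousLinearMap.id ℝ D).isClosed_ker, ?_⟩
  · ext x
    simp [sub_eq_zero]
  · rw [funext hw]
    exact tendsto_pow_relaxation_apply hT hlam.1 hlam.2 w0
end

section
/- Let U₁ and U₂ be closed linear subspaces of a real Hilbert space X, and define T : X × X → X × X by T(x,y) := ( P_{U₁}(x − y), P_{U₂^⊥}( (P_{U₁} − P_{U₁^⊥})(x − y) ) ). Then the fixed point set of T equals the product (U₁ ∩ U₂) × (U₁^⊥ ∩ U₂^⊥), i.e., T(x,y) = (x,y) if and only if x ∈ U₁ ∩ U₂ and y ∈ U₁^⊥ ∩ U₂^⊥. -/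
namespace Submodule

variable {𝕜 E : Type*} [RCLike 𝕜] [NormedAddCommGroup E] [InnerProductSpace 𝕜 E]
  (K : Submodule 𝕜 E) [K.HasOrthogonalProjection]

theorem starProjection_eq_iff {u v : E} : K.starProjection u = v ↔ v ∈ K ∧ u - v ∈ Kᗮ :=
  ⟨fun h => h ▸ ⟨K.starProjection_apply_mem u, K.sub_starProjection_mem_orthogonal u⟩,
    fun h => K.eq_starProjection_of_mem_orthogonal h.1 h.2⟩

theorem starProjection_sub_eq_iff {x y : E} :
    K.starProjection (x - y) = x ↔ x ∈ K ∧ y ∈ Kᗮ := by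
  rw [starProjection_eq_iff, sub_sub_cancel_left, neg_mem_iff]

theorem starProjection_orthogonal_add_eq_iff {x y : E} :
    Kᗮ.starProjection (x + y) = y ↔ x ∈ K ∧ y ∈ Kᗮ := by
  rw [starProjection_eq_iff, add_sub_cancel_right, orthogonal_orthogonal, and_comm]

end Submodule

theorem stmt_12_general
    {X : Type*} [NormedAddCommGroup X] [InnerProductSpace ℝ X]
    (U₁ U₂ : Submodule ℝ X) [U₁.HasOrthogonalProjection] [U₂.HasOrthogonalProjection]
    (x y : X) :
    ((Submodule.orthogonalProjectionOnto U₁ (x - y) : X) = x ∧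
        (Submodule.orthogonalProjectionOnto U₂ᗮ
          ((Submodule.orthogonalProjectionOnto U₁ (x - y) : X) -
            (Submodule.orthogonalProjectionOnto U₁ᗮ (x - y) : X)) : X) = y) ↔
      (x ∈ U₁ ⊓ U₂ ∧ y ∈ U₁ᗮ ⊓ U₂ᗮ) := by
  simp only [Submodule.coe_orthogonalProjectionOnto_apply, Submodule.mem_inf]
  rw [and_and_and_comm, ← U₁.starProjection_sub_eq_iff, ← U₂.starProjection_orthogonal_add_eq_iff]
  refine and_congr_right fun hx => ?_
  have hreflect : U₁.starProjection (x - y) - U₁ᗮ.starProjection (x - y) = x + y := by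
    rw [Submodule.starProjection_orthogonal_val, hx]
    abel
  rw [hreflect]

/-- The fixed point set of the Douglas–Rachford PPP operator
`T(x,y) = (P_{U₁}(x-y), P_{U₂ᗮ}((P_{U₁} - P_{U₁ᗮ})(x-y)))` for two closed subspaces `U₁, U₂`
equals `(U₁ ⊓ U₂) × (U₁ᗮ ⊓ U₂ᗮ)`. -/
theorem stmt_12
    {X : Type*} [NormedAddCommGroup X] [InnerProductSpace ℝ X] [CompleteSpace X]
    (U₁ U₂ : Submodule ℝ X) [U₁.HasOrthogonalProjection] [U₂.HasOrthogonalProjection]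
    (x y : X) :
    ((Submodule.orthogonalProjectionOnto U₁ (x - y) : X) = x ∧
        (Submodule.orthogonalProjectionOnto U₂ᗮ
          ((Submodule.orthogonalProjectionOnto U₁ (x - y) : X) -
            (Submodule.orthogonalProjectionOnto U₁ᗮ (x - y) : X)) : X) = y) ↔
      (x ∈ U₁ ⊓ U₂ ∧ y ∈ U₁ᗮ ⊓ U₂ᗮ) :=
  stmt_12_general U₁ U₂ x y
end

section
/- Let U₁ and U₂ be closed linear subspaces of a real Hilbert space X, and define T̃ : X → X by T̃ := P_{U₂} ∘ P_{U₁} + P_{U₂^⊥} ∘ P_{U₁^⊥}. Let λ ∈ (0,2) be a constant, let w0 ∈ X, and define w_{k+1} := (1 − λ)·w_k + λ·T̃(w_k). Then (w_k) converges strongly (in norm) to P_{U₁ ∩ U₂}(w0) + P_{U₁^⊥ ∩ U₂^⊥}(w0), and moreover P_{U₁}(w_k) converges strongly to P_{U₁ ∩ U₂}(w0). -/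
/-!
Writing `R₁, R₂` for the reflections in `U₁, U₂`, one has `2 T̃ - 1 = R₂ R₁`, an isometry, so
`‖T̃ x‖² = ⟪T̃ x, x⟫`. Hence the relaxed operator `S = (1 - λ) + λ T̃` satisfies
`‖S x‖² + (2 - λ)/λ ‖x - S x‖² ≤ ‖x‖²` for `λ ∈ (0, 2)`: the orbit differences `S^k x - S^{k+1} x`
are square-summable, so `S^k → 0` on the range of `S - 1`. That range is dense in the orthogonal
complement of `Fix S`, and the `S^k` are uniformly bounded, so `S^k x → P_{Fix S} x`.
Finally `Fix S = Fix T̃ = {x | P_{U₁} x = P_{U₂} x} = (U₁ ⊓ U₂) ⊕ (U₁ᗮ ⊓ U₂ᗮ)`, whose projection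
is `P_{U₁ ⊓ U₂} + P_{U₁ᗮ ⊓ U₂ᗮ}`; applying `P_{U₁}` to the limit gives the shadows' limit.
-/

open Filter Topology Submodule
open scoped RealInnerProductSpace

namespace ContinuousLinearMap

variable {E : Type*} [NormedAddCommGroup E] [InnerProductSpace ℝ E]

section StronglyNonexpansive

variable {f : E →L[ℝ] E} {c : ℝ}

theorem opNorm_le_one_of_norm_sq_add_le (hc : 0 ≤ c)
    (hf : ∀ x, ‖f x‖ ^ 2 + c * ‖x - f x‖ ^ 2 ≤ ‖x‖ ^ 2) : ‖f‖ ≤ 1 :=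
  opNorm_le_bound _ zero_le_one fun x => by
    rw [one_mul, ← pow_le_pow_iff_left₀ (norm_nonneg _) (norm_nonneg _) two_ne_zero]
    nlinarith [hf x, sq_nonneg ‖x - f x‖]

theorem tendsto_pow_apply_sub_pow_succ_apply (hc : 0 < c)
    (hf : ∀ x, ‖f x‖ ^ 2 + c * ‖x - f x‖ ^ 2 ≤ ‖x‖ ^ 2) (x : E) :
    Tendsto (fun k => (f ^ k) x - (f ^ (k + 1)) x) atTop (𝓝 0) := by
  set d : ℕ → ℝ := fun k => ‖(f ^ k) x - (f ^ (k + 1)) x‖ ^ 2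
  have hstep : ∀ k, c * d k ≤ ‖(f ^ k) x‖ ^ 2 - ‖(f ^ (k + 1)) x‖ ^ 2 := fun k => by
    have hsucc : (f ^ (k + 1)) x = f ((f ^ k) x) := by rw [pow_succ']; rfl
    simp only [d, hsucc]
    linarith [hf ((f ^ k) x)]
  have hsum : ∀ n, ∑ k ∈ Finset.range n, d k ≤ ‖x‖ ^ 2 / c := fun n => by
    rw [le_div_iff₀ hc, Finset.sum_mul]
    calc ∑ k ∈ Finset.range n, d k * c
        ≤ ∑ k ∈ Finset.range n, (‖(f ^ k) x‖ ^ 2 - ‖(f ^ (k + 1)) x‖ ^ 2) :=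
          Finset.sum_le_sum fun k _ => by linarith [hstep k]
      _ = ‖x‖ ^ 2 - ‖(f ^ n) x‖ ^ 2 := by rw [Finset.sum_range_sub']; simp
      _ ≤ ‖x‖ ^ 2 := by linarith [sq_nonneg ‖(f ^ n) x‖]
  have hd : Tendsto d atTop (𝓝 0) :=
    (summable_of_sum_range_le (fun _ => sq_nonneg _) hsum).tendsto_atTop_zero
  rw [tendsto_zero_iff_norm_tendsto_zero]
  simpa [d, Real.sqrt_sq (norm_nonneg _)] using hd.sqrt

theorem orthogonal_eqLocus_one_le_topologicalClosure_range [CompleteSpace E] (hf : ‖f‖ ≤ 1) :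
    (f.eqLocus (1 : E →L[ℝ] E))ᗮ ≤
      (LinearMap.range ((f - 1 : E →L[ℝ] E) : E →ₗ[ℝ] E)).topologicalClosure := by
  rw [← orthogonal_orthogonal_eq_closure]
  refine orthogonal_le fun x hx => eq_of_norm_le_re_inner_eq_norm_sq (𝕜 := ℝ) ?_ ?_
  · simpa using f.le_of_opNorm_le hf x
  · have : ∀ y, ⟪f y, x⟫ = ⟪y, x⟫ := by
      simpa [Submodule.mem_orthogonal, inner_sub_left, sub_eq_zero] using hx
    simp [this]

theorem isClosed_setOf_tendsto_pow_apply_zero (hf : ‖f‖ ≤ 1) :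
    IsClosed {x | Tendsto (fun k => (f ^ k) x) atTop (𝓝 0)} := by
  have hlip : ∀ k, LipschitzWith 1 ⇑(f ^ k) := fun k => by
    simpa [FunLike.coe_pow_eq_iterate] using
      (f.lipschitz.weaken (show ‖f‖₊ ≤ 1 by rw [← NNReal.coe_le_coe]; simpa using hf)).iterate k
  exact (LipschitzWith.uniformEquicontinuous _ 1 hlip).equicontinuous.isClosed_setOfPred_tendsto
    continuous_const

theorem tendsto_pow_apply_starProjection_eqLocus [CompleteSpace E] (hc : 0 < c)
    (hf : ∀ x, ‖f x‖ ^ 2 + c * ‖x - f x‖ ^ 2 ≤ ‖x‖ ^ 2) (x : E) :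
    Tendsto (fun k => (f ^ k) x) atTop (𝓝 ((f.eqLocus (1 : E →L[ℝ] E)).starProjection x)) := by
  set K := f.eqLocus (1 : E →L[ℝ] E)
  have hf1 := opNorm_le_one_of_norm_sq_add_le hc.le hf
  have hfix : ∀ k, (f ^ k) (K.starProjection x) = K.starProjection x := fun k => by
    rw [FunLike.coe_pow_eq_iterate]
    exact Function.IsFixedPt.iterate (K.starProjection_apply_mem x) k
  have hperp : Tendsto (fun k => (f ^ k) (x - K.starProjection x)) atTop (𝓝 0) := by
    refine closure_minimal ?_ (isClosed_setOf_tendsto_pow_apply_zero hf1)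
      (orthogonal_eqLocus_one_le_topologicalClosure_range hf1 (sub_starProjection_mem_orthogonal x))
    rintro _ ⟨y, rfl⟩
    simpa [pow_succ, mul_apply] using (tendsto_pow_apply_sub_pow_succ_apply hc hf y).neg
  simpa only [map_sub, hfix, sub_add_cancel, zero_add] using hperp.add_const (K.starProjection x)

end StronglyNonexpansive

section Relaxation

variable {T : E →L[ℝ] E} {lam : ℝ}

noncomputable def relax (T : E →L[ℝ] E) (lam : ℝ) : E →L[ℝ] E :=
  (1 - lam) • 1 + lam • T

theorem relax_apply (x : E) : T.relax lam x = (1 - lam) • x + lam • T x := rfl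

theorem relax_apply_eq_self_iff (hlam : lam ≠ 0) (x : E) : T.relax lam x = x ↔ T x = x := by
  have : T.relax lam x = x + lam • (T x - x) := by rw [relax_apply]; module
  rw [this, add_eq_left, smul_eq_zero, sub_eq_zero, or_iff_right hlam]

theorem norm_relax_apply_sq_add_le (hT : ∀ x, ‖T x‖ ^ 2 ≤ ⟪T x, x⟫) (hlam : 0 < lam) (x : E) :
    ‖T.relax lam x‖ ^ 2 + (2 - lam) / lam * ‖x - T.relax lam x‖ ^ 2 ≤ ‖x‖ ^ 2 := by
  have hres : x - T.relax lam x = lam • (x - T x) := by rw [relax_apply]; module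
  rw [hres, relax_apply]
  simp only [norm_add_sq_real, norm_sub_sq_real, norm_smul, mul_pow, real_inner_smul_left,
    real_inner_smul_right, Real.norm_eq_abs, sq_abs]
  have := real_inner_comm x (T x) ▸ hT x
  field_simp
  nlinarith

end Relaxation

end ContinuousLinearMap

namespace Submodule

variable {X : Type*} [NormedAddCommGroup X] [InnerProductSpace ℝ X]
  (U₁ U₂ : Submodule ℝ X) [U₁.HasOrthogonalProjection] [U₂.HasOrthogonalProjection]

noncomputable def douglasRachford : X →L[ℝ] X :=
  U₂.starProjection ∘L U₁.starProjection + U₂ᗮ.starProjection ∘L U₁ᗮ.starProjection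

theorem two_smul_douglasRachford_apply_sub (x : X) :
    (2 : ℝ) • douglasRachford U₁ U₂ x - x = U₂.reflection (U₁.reflection x) := by
  simp only [douglasRachford, add_apply, ContinuousLinearMap.comp_apply,
    starProjection_orthogonal_val, reflection_apply, map_sub, map_nsmul]
  module

theorem norm_douglasRachford_apply_sq (x : X) :
    ‖douglasRachford U₁ U₂ x‖ ^ 2 = ⟪douglasRachford U₁ U₂ x, x⟫ := by
  have h : ‖(2 : ℝ) • douglasRachford U₁ U₂ x - x‖ ^ 2 = ‖x‖ ^ 2 := by
    rw [two_smul_douglasRachford_apply_sub, LinearIsometryEquiv.norm_map,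
      LinearIsometryEquiv.norm_map]
  rw [norm_sub_sq_real, norm_smul, mul_pow, real_inner_smul_left, Real.norm_two] at h
  linarith

theorem douglasRachford_apply_eq_self_iff (x : X) :
    douglasRachford U₁ U₂ x = x ↔ U₁.starProjection x = U₂.starProjection x :=
  calc douglasRachford U₁ U₂ x = x ↔ (2 : ℝ) • douglasRachford U₁ U₂ x - x = x := by
        rw [sub_eq_iff_eq_add, ← two_smul ℝ x, smul_right_inj two_ne_zero]
    _ ↔ U₁.reflection x = U₂.reflection x := by
        rw [two_smul_douglasRachford_apply_sub, ← LinearIsometryEquiv.eq_symm_apply,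
          reflection_symm]
    _ ↔ U₁.starProjection x = U₂.starProjection x := by
        rw [reflection_apply, reflection_apply, sub_left_inj, two_smul ℕ, two_smul ℕ,
          ← two_smul ℝ, ← two_smul ℝ, smul_right_inj two_ne_zero]

variable {U₁ U₂} in
theorem starProjection_eq_starProjection_inf_add [(U₁ ⊓ U₂).HasOrthogonalProjection]
    [(U₁ᗮ ⊓ U₂ᗮ).HasOrthogonalProjection] (K : Submodule ℝ X) [K.HasOrthogonalProjection]
    (hK : ∀ x, x ∈ K ↔ U₁.starProjection x = U₂.starProjection x) (x : X) :
    K.starProjection x = (U₁ ⊓ U₂).starProjection x + (U₁ᗮ ⊓ U₂ᗮ).starProjection x := by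
  set p := (U₁ ⊓ U₂).starProjection x
  set q := (U₁ᗮ ⊓ U₂ᗮ).starProjection x
  obtain ⟨hp₁, hp₂⟩ := mem_inf.1 (starProjection_apply_mem (U₁ ⊓ U₂) x)
  obtain ⟨hq₁, hq₂⟩ := mem_inf.1 (starProjection_apply_mem (U₁ᗮ ⊓ U₂ᗮ) x)
  refine eq_starProjection_of_mem_of_inner_eq_zero ((hK _).2 ?_) fun y hy => ?_
  · rw [eq_starProjection_of_mem_orthogonal' hp₁ hq₁ rfl,
      eq_starProjection_of_mem_orthogonal' hp₂ hq₂ rfl]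
  · have hPy := (hK y).1 hy
    obtain ⟨a, ha, b, hb, rfl⟩ : ∃ a ∈ U₁ ⊓ U₂, ∃ b ∈ U₁ᗮ ⊓ U₂ᗮ, y = a + b :=
      ⟨_, ⟨starProjection_apply_mem _ y, hPy ▸ starProjection_apply_mem _ y⟩,
        _, ⟨sub_starProjection_mem_orthogonal y, hPy ▸ sub_starProjection_mem_orthogonal y⟩,
        (add_sub_cancel _ _).symm⟩
    have h₁ := inner_left_of_mem_orthogonal ha (sub_starProjection_mem_orthogonal (K := U₁ ⊓ U₂) x)
    have h₂ := inner_left_of_mem_orthogonal (mem_inf.1 ha).1 hq₁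
    have h₃ := inner_left_of_mem_orthogonal hb
      (sub_starProjection_mem_orthogonal (K := U₁ᗮ ⊓ U₂ᗮ) x)
    have h₄ := inner_right_of_mem_orthogonal hp₁ (mem_inf.1 hb).1
    simp only [inner_sub_left, inner_add_left, inner_add_right] at h₁ h₃ ⊢
    linarith

end Submodule

/-- Strong convergence of the relaxed Douglas–Rachford iteration for two closed subspaces:
with `T̃ = P_{U₂} P_{U₁} + P_{U₂ᗮ} P_{U₁ᗮ}` and `λ ∈ (0,2)`, the iterates converge in norm to
`P_{U₁ ⊓ U₂} w0 + P_{U₁ᗮ ⊓ U₂ᗮ} w0`, and the shadows `P_{U₁} w_k` converge in norm to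
`P_{U₁ ⊓ U₂} w0`. -/
theorem stmt_13
    {X : Type*} [NormedAddCommGroup X] [InnerProductSpace ℝ X] [CompleteSpace X]
    (U₁ U₂ : Submodule ℝ X) [Submodule.HasOrthogonalProjection U₁] [Submodule.HasOrthogonalProjection U₂]
    [Submodule.HasOrthogonalProjection (U₁ ⊓ U₂)] [Submodule.HasOrthogonalProjection (U₁ᗮ ⊓ U₂ᗮ)]
    (lam : ℝ) (hlam : lam ∈ Set.Ioo (0 : ℝ) 2)
    (w0 : X) (w : ℕ → X) (hw0 : w 0 = w0)
    (hrec : ∀ k, w (k + 1) = (1 - lam) • w k +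
      lam • ((Submodule.orthogonalProjectionOnto U₂ (Submodule.orthogonalProjectionOnto U₁ (w k) : X) : X) +
        (Submodule.orthogonalProjectionOnto U₂ᗮ (Submodule.orthogonalProjectionOnto U₁ᗮ (w k) : X) : X))) :
    Filter.Tendsto w Filter.atTop
        (nhds ((Submodule.orthogonalProjectionOnto (U₁ ⊓ U₂) w0 : X) +
          (Submodule.orthogonalProjectionOnto (U₁ᗮ ⊓ U₂ᗮ) w0 : X))) ∧
      Filter.Tendsto (fun k => (Submodule.orthogonalProjectionOnto U₁ (w k) : X)) Filter.atTop
        (nhds (Submodule.orthogonalProjectionOnto (U₁ ⊓ U₂) w0 : X)) := by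
  obtain ⟨hlam₀, hlam₂⟩ := hlam
  set S := (douglasRachford U₁ U₂).relax lam
  have hw : w = fun k => (S ^ k) w0 := funext fun k => by
    induction k with
    | zero => rw [hw0]; rfl
    | succ k ih =>
      rw [hrec, ih, pow_succ', mul_apply_eq_comp]
      simp only [S, ContinuousLinearMap.relax_apply, douglasRachford,
        ContinuousLinearMap.comp_apply, add_apply, coe_orthogonalProjectionOnto_apply]
  have hfix : ∀ x, x ∈ S.eqLocus (1 : X →L[ℝ] X) ↔ U₁.starProjection x = U₂.starProjection x :=
    fun x => (ContinuousLinearMap.relax_apply_eq_self_iff hlam₀.ne' x).trans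
      (douglasRachford_apply_eq_self_iff U₁ U₂ x)
  have hlim := ContinuousLinearMap.tendsto_pow_apply_starProjection_eqLocus
    (div_pos (by linarith) hlam₀) (ContinuousLinearMap.norm_relax_apply_sq_add_le
      (fun x => (norm_douglasRachford_apply_sq U₁ U₂ x).le) hlam₀) w0
  rw [starProjection_eq_starProjection_inf_add _ hfix] at hlim
  simp only [coe_orthogonalProjectionOnto_apply, hw]
  refine ⟨hlim, ?_⟩
  have hP₁ := eq_starProjection_of_mem_orthogonal'
    (mem_inf.1 (starProjection_apply_mem (U₁ ⊓ U₂) w0)).1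
    (mem_inf.1 (starProjection_apply_mem (U₁ᗮ ⊓ U₂ᗮ) w0)).1 rfl
  simpa only [hP₁, Function.comp_def] using (U₁.starProjection.continuous.tendsto _).comp hlim
end

section
/- Let X and Y be real Hilbert spaces, let L : X → Y be a continuous ℝ-linear map with adjoint L* : Y → X, let U ⊆ X and V ⊆ Y be closed linear subspaces, and let σ > 0 and τ > 0. Define T : X × Y → X × Y by T(x,y) := ( P_U(x − σ L* y), P_{V^⊥}( y + τ L( 2 P_U(x − σ L* y) − x ) ) ). Then T(x,y) = (x,y) if and only if x ∈ U, L x ∈ V, y ∈ V^⊥, and L* y ∈ U^⊥; that is, the fixed point set of T equals (U ∩ L⁻¹(V)) × (V^⊥ ∩ (L*)⁻¹(U^⊥)). -/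
open scoped RealInnerProductSpace

/-!
For `x ∈ K` and `c ≠ 0`, linearity gives `P_K (x + c • z) = x + c • P_K z`, so `x + c • z` projects
to `x` exactly when `x ∈ K` and `z ∈ Kᗮ`. The first component of `T(x, y) = (x, y)` is of this form;
substituting it into the second component turns `2 P_U(…) - x` into `x`, and the second component
becomes of this form as well, with `K = Vᗮ` and `z = L x`.
-/

namespace Submodule

variable {𝕜 E : Type*} [RCLike 𝕜] [NormedAddCommGroup E] [InnerProductSpace 𝕜 E]
  (K : Submodule 𝕜 E) [K.HasOrthogonalProjection]

theorem starProjection_add_smul_eq_self_iff {c : 𝕜} (hc : c ≠ 0) {x z : E} :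
    K.starProjection (x + c • z) = x ↔ x ∈ K ∧ z ∈ Kᗮ := by
  have hlin {x} (hx : x ∈ K) :
      K.starProjection (x + c • z) = x + c • K.starProjection z := by
    rw [map_add, map_smul, starProjection_eq_self_iff.mpr hx]
  constructor
  · intro h
    have hx : x ∈ K := h ▸ K.starProjection_apply_mem _
    rw [hlin hx, add_eq_left] at h
    exact ⟨hx, (starProjection_apply_eq_zero_iff K).mp ((smul_eq_zero_iff_right hc).mp h)⟩
  · rintro ⟨hx, hz⟩
    rw [hlin hx, (starProjection_apply_eq_zero_iff K).mpr hz, smul_zero, add_zero]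

end Submodule

open Submodule in
/-- The fixed point set of the Chambolle–Pock operator for the normal cones of closed
subspaces `U ⊆ X`, `V ⊆ Y` equals `(U ∩ L⁻¹(V)) × (Vᗮ ∩ (L*)⁻¹(Uᗮ))`. -/
theorem stmt_14
    {X Y : Type*} [NormedAddCommGroup X] [InnerProductSpace ℝ X] [CompleteSpace X]
    [NormedAddCommGroup Y] [InnerProductSpace ℝ Y] [CompleteSpace Y]
    (L : X →L[ℝ] Y) (U : Submodule ℝ X) (V : Submodule ℝ Y)
    [U.HasOrthogonalProjection] [V.HasOrthogonalProjection]
    (σ τ : ℝ) (hσ : 0 < σ) (hτ : 0 < τ)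
    (x : X) (y : Y) :
    ((Submodule.orthogonalProjectionOnto U (x - σ • ContinuousLinearMap.adjoint L y) : X) = x ∧
        (Submodule.orthogonalProjectionOnto Vᗮ
          (y + τ • L ((2 : ℝ) •
            (Submodule.orthogonalProjectionOnto U (x - σ • ContinuousLinearMap.adjoint L y) : X) - x)) : Y)
          = y) ↔
      (x ∈ U ∧ L x ∈ V ∧ y ∈ Vᗮ ∧ ContinuousLinearMap.adjoint L y ∈ Uᗮ) := by
  simp only [coe_orthogonalProjectionOnto_apply]
  have hU : U.starProjection (x - σ • L.adjoint y) = x ↔ x ∈ U ∧ L.adjoint y ∈ Uᗮ := by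
    rw [sub_eq_add_neg, ← neg_smul, starProjection_add_smul_eq_self_iff U (neg_ne_zero.mpr hσ.ne')]
  rw [and_congr_right fun h => by rw [h, two_smul, add_sub_cancel_right], hU,
    starProjection_add_smul_eq_self_iff Vᗮ hτ.ne', orthogonal_orthogonal]
  tauto
end

section
/- Let X and Y be real Hilbert spaces, let L : X → Y be a continuous ℝ-linear map with adjoint L*, let U ⊆ X and V ⊆ Y be closed linear subspaces, and let σ > 0 and τ > 0. Let F := {(x,y) ∈ X × Y : x ∈ U, L x ∈ V, y ∈ V^⊥, L* y ∈ U^⊥}, and for (x₀,y₀) ∈ X × Y define Q(x,y) := (1/σ)‖x − x₀‖² − 2⟪L(x − x₀), y − y₀⟫ + (1/τ)‖y − y₀‖². Set x̂ := P_{U ∩ L⁻¹(V)}(x₀ − σ L* y₀) and ŷ := P_{V^⊥ ∩ (L*)⁻¹(U^⊥)}(y₀ − τ L x₀). Then (x̂, ŷ) ∈ F and (x̂, ŷ) is the unique minimizer of Q over F: for every (x,y) ∈ F, Q(x̂,ŷ) ≤ Q(x,y), with equality only if (x,y) = (x̂,ŷ). -/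
/-!
On pairs with `⟪L x, y⟫ = 0` the cross term of `Q` is affine in `(x, y)`, so completing the square
turns `Q` into `(1/σ)‖x - (x₀ - σL*y₀)‖² + (1/τ)‖y - (y₀ - τLx₀)‖²` plus a constant. The fixed point
set is the product `(U ∩ L⁻¹V) × (Vᗮ ∩ (L*)⁻¹Uᗮ)` of two subspaces on which this orthogonality holds,
so the two squared distances are minimized separately by orthogonal projection, and Pythagoras gives
`Q(x,y) = Q(x̂,ŷ) + (1/σ)‖x - x̂‖² + (1/τ)‖y - ŷ‖²`.
-/

open scoped RealInnerProductSpace InnerProduct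

section Pythagoras

variable {E : Type*} [NormedAddCommGroup E] [InnerProductSpace ℝ E]

theorem Submodule.norm_sub_sq_eq_norm_starProjection_sub_sq_add (K : Submodule ℝ E)
    [K.HasOrthogonalProjection] (u : E) {v : E} (hv : v ∈ K) :
    ‖v - u‖ ^ 2 = ‖K.starProjection u - u‖ ^ 2 + ‖v - K.starProjection u‖ ^ 2 := by
  have horth : ⟪K.starProjection u - u, v - K.starProjection u⟫ = 0 := by
    rw [← neg_sub u, inner_neg_left, neg_eq_zero, real_inner_comm]
    exact K.sub_starProjection_mem_orthogonal u _ (K.sub_mem hv (K.starProjection_apply_mem u))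
  rw [← sub_add_sub_cancel v (K.starProjection u) u, add_comm, norm_add_sq_real, horth]
  ring

end Pythagoras

section ChambollePock

variable {X Y : Type*} [NormedAddCommGroup X] [InnerProductSpace ℝ X]
  [NormedAddCommGroup Y] [InnerProductSpace ℝ Y]

/-- The squared `M`-seminorm distance `‖(x, y) - (x₀, y₀)‖²_M` of the Chambolle–Pock
preconditioner `M = [[(1/σ) Id, -L*], [-L, (1/τ) Id]]`. -/
noncomputable def cpDist (L : X →L[ℝ] Y) (σ τ : ℝ) (x₀ : X) (y₀ : Y) (x : X) (y : Y) : ℝ :=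
  (1 / σ) * ‖x - x₀‖ ^ 2 - 2 * ⟪L (x - x₀), y - y₀⟫ + (1 / τ) * ‖y - y₀‖ ^ 2

variable [CompleteSpace X] [CompleteSpace Y] (L : X →L[ℝ] Y) {σ τ : ℝ} (x₀ : X) (y₀ : Y)

theorem cpDist_eq_of_inner_eq_zero (hσ : σ ≠ 0) (hτ : τ ≠ 0) {x : X} {y : Y}
    (hxy : ⟪L x, y⟫ = 0) :
    cpDist L σ τ x₀ y₀ x y =
      (1 / σ) * ‖x - (x₀ - σ • (L†) y₀)‖ ^ 2 + (1 / τ) * ‖y - (y₀ - τ • L x₀)‖ ^ 2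
        + (2 * ⟪L x₀, y₀⟫ - σ * ‖(L†) y₀‖ ^ 2 - τ * ‖L x₀‖ ^ 2) := by
  have hx : x - (x₀ - σ • (L†) y₀) = (x - x₀) + σ • (L†) y₀ := by abel
  have hy : y - (y₀ - τ • L x₀) = (y - y₀) + τ • L x₀ := by abel
  rw [cpDist, hx, hy, norm_add_sq_real, norm_add_sq_real, real_inner_smul_right,
    real_inner_smul_right, norm_smul, norm_smul, ContinuousLinearMap.adjoint_inner_right]
  simp only [map_sub, inner_sub_left, inner_sub_right, hxy, Real.norm_eq_abs, mul_pow, sq_abs,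
    real_inner_comm (L x₀)]
  field_simp
  ring

theorem cpDist_eq_cpDist_starProjection_add {K : Submodule ℝ X} {K' : Submodule ℝ Y}
    [K.HasOrthogonalProjection] [K'.HasOrthogonalProjection]
    (hKK' : ∀ x ∈ K, ∀ y ∈ K', ⟪L x, y⟫ = 0) (hσ : σ ≠ 0) (hτ : τ ≠ 0)
    {x : X} {y : Y} (hx : x ∈ K) (hy : y ∈ K') :
    cpDist L σ τ x₀ y₀ x y =
      cpDist L σ τ x₀ y₀ (K.starProjection (x₀ - σ • (L†) y₀)) (K'.starProjection (y₀ - τ • L x₀))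
        + (1 / σ) * ‖x - K.starProjection (x₀ - σ • (L†) y₀)‖ ^ 2
        + (1 / τ) * ‖y - K'.starProjection (y₀ - τ • L x₀)‖ ^ 2 := by
  rw [cpDist_eq_of_inner_eq_zero L x₀ y₀ hσ hτ (hKK' x hx y hy),
    cpDist_eq_of_inner_eq_zero L x₀ y₀ hσ hτ
      (hKK' _ (K.starProjection_apply_mem _) _ (K'.starProjection_apply_mem _)),
    K.norm_sub_sq_eq_norm_starProjection_sub_sq_add _ hx,
    K'.norm_sub_sq_eq_norm_starProjection_sub_sq_add _ hy]
  ring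

end ChambollePock

theorem stmt_15_general
    {X Y : Type*} [NormedAddCommGroup X] [InnerProductSpace ℝ X] [CompleteSpace X]
    [NormedAddCommGroup Y] [InnerProductSpace ℝ Y] [CompleteSpace Y]
    (L : X →L[ℝ] Y) (U : Submodule ℝ X) (V : Submodule ℝ Y)
    [Submodule.HasOrthogonalProjection (U ⊓ Submodule.comap (L : X →ₗ[ℝ] Y) V)]
    [Submodule.HasOrthogonalProjection
      (Vᗮ ⊓ Submodule.comap (ContinuousLinearMap.adjoint L : Y →ₗ[ℝ] X) Uᗮ)]
    (σ τ : ℝ) (hσ : 0 < σ) (hτ : 0 < τ)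
    (x₀ : X) (y₀ : Y)
    (Q : X → Y → ℝ)
    (hQ : ∀ x y, Q x y = (1 / σ) * ‖x - x₀‖ ^ 2 - 2 * ⟪L (x - x₀), y - y₀⟫
      + (1 / τ) * ‖y - y₀‖ ^ 2)
    (xhat : X)
    (hxhat : xhat = (Submodule.orthogonalProjectionOnto (U ⊓ Submodule.comap (L : X →ₗ[ℝ] Y) V)
      (x₀ - σ • ContinuousLinearMap.adjoint L y₀) : X))
    (yhat : Y)
    (hyhat : yhat = (Submodule.orthogonalProjectionOnto
      (Vᗮ ⊓ Submodule.comap (ContinuousLinearMap.adjoint L : Y →ₗ[ℝ] X) Uᗮ)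
      (y₀ - τ • L x₀) : Y)) :
    (xhat ∈ U ∧ L xhat ∈ V ∧ yhat ∈ Vᗮ ∧ ContinuousLinearMap.adjoint L yhat ∈ Uᗮ) ∧
      ∀ x : X, ∀ y : Y, x ∈ U → L x ∈ V → y ∈ Vᗮ → ContinuousLinearMap.adjoint L y ∈ Uᗮ →
        Q xhat yhat ≤ Q x y ∧ (Q x y = Q xhat yhat → x = xhat ∧ y = yhat) := by
  rw [← Submodule.starProjection_apply] at hxhat hyhat
  obtain rfl : Q = cpDist L σ τ x₀ y₀ := funext fun x ↦ funext (hQ x)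
  have hxhat_mem := hxhat ▸ Submodule.starProjection_apply_mem _ _
  have hyhat_mem := hyhat ▸ Submodule.starProjection_apply_mem _ _
  refine ⟨⟨hxhat_mem.1, hxhat_mem.2, hyhat_mem.1, hyhat_mem.2⟩, fun x y hxU hLx hyV hLy ↦ ?_⟩
  have hsplit := cpDist_eq_cpDist_starProjection_add L x₀ y₀
    (K := U ⊓ Submodule.comap (L : X →ₗ[ℝ] Y) V) (K' := Vᗮ ⊓ Submodule.comap ((L†) : Y →ₗ[ℝ] X) Uᗮ)
    (fun x hx y hy ↦ hy.1 (L x) hx.2) hσ.ne' hτ.ne' ⟨hxU, hLx⟩ ⟨hyV, hLy⟩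
  rw [← hxhat, ← hyhat] at hsplit
  have hdx : 0 ≤ (1 / σ) * ‖x - xhat‖ ^ 2 := by positivity
  have hdy : 0 ≤ (1 / τ) * ‖y - yhat‖ ^ 2 := by positivity
  refine ⟨by linarith, fun heq ↦ ?_⟩
  obtain ⟨hx0, hy0⟩ := (add_eq_zero_iff_of_nonneg hdx hdy).1 (by linarith)
  simpa [hσ.ne', hτ.ne', sub_eq_zero] using And.intro hx0 hy0

/-- The pair `(x̂, ŷ) = (P_{U ∩ L⁻¹(V)}(x₀ - σL*y₀), P_{Vᗮ ∩ (L*)⁻¹(Uᗮ)}(y₀ - τLx₀))` belongs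
to the Chambolle–Pock fixed point set `F` and is the unique minimizer over `F` of the
`M`-seminorm distance `Q(x,y) = (1/σ)‖x-x₀‖² - 2⟪L(x-x₀), y-y₀⟫ + (1/τ)‖y-y₀‖²`. -/
theorem stmt_15
    {X Y : Type*} [NormedAddCommGroup X] [InnerProductSpace ℝ X] [CompleteSpace X]
    [NormedAddCommGroup Y] [InnerProductSpace ℝ Y] [CompleteSpace Y]
    (L : X →L[ℝ] Y) (U : Submodule ℝ X) (V : Submodule ℝ Y)
    [Submodule.HasOrthogonalProjection U] [Submodule.HasOrthogonalProjection V]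
    [Submodule.HasOrthogonalProjection (U ⊓ Submodule.comap (L : X →ₗ[ℝ] Y) V)]
    [Submodule.HasOrthogonalProjection
      (Vᗮ ⊓ Submodule.comap (ContinuousLinearMap.adjoint L : Y →ₗ[ℝ] X) Uᗮ)]
    (σ τ : ℝ) (hσ : 0 < σ) (hτ : 0 < τ)
    (x₀ : X) (y₀ : Y)
    (Q : X → Y → ℝ)
    (hQ : ∀ x y, Q x y = (1 / σ) * ‖x - x₀‖ ^ 2 - 2 * ⟪L (x - x₀), y - y₀⟫
      + (1 / τ) * ‖y - y₀‖ ^ 2)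
    (xhat : X)
    (hxhat : xhat = (Submodule.orthogonalProjectionOnto (U ⊓ Submodule.comap (L : X →ₗ[ℝ] Y) V)
      (x₀ - σ • ContinuousLinearMap.adjoint L y₀) : X))
    (yhat : Y)
    (hyhat : yhat = (Submodule.orthogonalProjectionOnto
      (Vᗮ ⊓ Submodule.comap (ContinuousLinearMap.adjoint L : Y →ₗ[ℝ] X) Uᗮ)
      (y₀ - τ • L x₀) : Y)) :
    (xhat ∈ U ∧ L xhat ∈ V ∧ yhat ∈ Vᗮ ∧ ContinuousLinearMap.adjoint L yhat ∈ Uᗮ) ∧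
      ∀ x : X, ∀ y : Y, x ∈ U → L x ∈ V → y ∈ Vᗮ → ContinuousLinearMap.adjoint L y ∈ Uᗮ →
        Q xhat yhat ≤ Q x y ∧ (Q x y = Q xhat yhat → x = xhat ∧ y = yhat) :=
  stmt_15_general L U V σ τ hσ hτ x₀ y₀ Q hQ xhat hxhat yhat hyhat
end

section
/- Let τ > 0 and θ ∈ [0, π), and let T be the real 4×4 matrix with rows: (1, 0, −1/τ, 0); (0, 0, 0, 0); (τ sin²θ, τ cosθ sinθ, −sin²θ, −cosθ sinθ); (−τ cosθ sinθ, −τ cos²θ, cosθ sinθ, cos²θ). Then the spectral radius of T (i.e., the maximum of the absolute values of the complex eigenvalues of T) equals |cos θ|; in particular it is independent of τ. -/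
/-!
With `c = cos θ`, `s = sin θ` and `τ ≠ 0`, the characteristic polynomial of `T` is
`μ² (μ² - 2c²μ + c²)`, whose nonzero roots are `c e^{±iθ} = c (c ± i s)`; both have modulus `|c|`.
-/

open Complex ComplexConjugate Matrix

noncomputable def chambollePockMatrix (τ c s : ℝ) : Matrix (Fin 4) (Fin 4) ℝ :=
  !![1, 0, -1/τ, 0;
     0, 0, 0, 0;
     τ * s ^ 2, τ * c * s, -(s ^ 2), -(c * s);
     -(τ * c * s), -(τ * c ^ 2), c * s, c ^ 2]

section

variable {τ c s : ℝ}

theorem det_scalar_sub_chambollePockMatrix (hτ : τ ≠ 0) (hsc : s ^ 2 + c ^ 2 = 1) (μ : ℂ) :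
    (scalar (Fin 4) μ - (chambollePockMatrix τ c s).map ofReal).det
      = μ ^ 2 * (μ - c * (c + s * I)) * (μ - conj (c * (c + s * I))) := by
  have hτ' : (τ : ℂ) ≠ 0 := ofReal_ne_zero.2 hτ
  have hsc' : (s : ℂ) ^ 2 + c ^ 2 = 1 := by exact_mod_cast hsc
  simp [chambollePockMatrix, det_succ_row_zero, Fin.sum_univ_succ, Fin.succAbove]
  field_simp
  linear_combination (μ ^ 2 * c ^ 2 * s ^ 2) * I_sq + (μ ^ 3 - μ ^ 2 * c ^ 2) * hsc'

theorem mem_spectrum_chambollePockMatrix_iff (hτ : τ ≠ 0) (hsc : s ^ 2 + c ^ 2 = 1) (μ : ℂ) :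
    μ ∈ spectrum ℂ ((chambollePockMatrix τ c s).map ofReal) ↔
      μ = 0 ∨ μ = c * (c + s * I) ∨ μ = conj (c * (c + s * I)) := by
  rw [mem_spectrum_iff_isRoot_charpoly, Polynomial.IsRoot.def, eval_charpoly,
    det_scalar_sub_chambollePockMatrix hτ hsc]
  simp [sub_eq_zero, or_assoc]

theorem norm_ofReal_mul_add_mul_I (hsc : s ^ 2 + c ^ 2 = 1) : ‖(c : ℂ) * (c + s * I)‖ = |c| := by
  rw [norm_mul, norm_real, Real.norm_eq_abs, norm_add_mul_I, add_comm, hsc, Real.sqrt_one, mul_one]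

end

theorem stmt_16_general (τ θ : ℝ) (hτ : 0 < τ) :
    IsGreatest {r : ℝ | ∃ μ ∈ spectrum ℂ
        ((!![1, 0, -1/τ, 0;
             0, 0, 0, 0;
             τ * Real.sin θ ^ 2, τ * Real.cos θ * Real.sin θ,
               -(Real.sin θ ^ 2), -(Real.cos θ * Real.sin θ);
             -(τ * Real.cos θ * Real.sin θ), -(τ * Real.cos θ ^ 2),
               Real.cos θ * Real.sin θ, Real.cos θ ^ 2] :
            Matrix (Fin 4) (Fin 4) ℝ).map Complex.ofReal),
        r = ‖μ‖}
      |Real.cos θ| := by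
  have hsc := Real.sin_sq_add_cos_sq θ
  have hspec := mem_spectrum_chambollePockMatrix_iff hτ.ne' hsc
  have hnorm := norm_ofReal_mul_add_mul_I hsc
  refine ⟨⟨_, (hspec _).2 (Or.inr (Or.inl rfl)), hnorm.symm⟩, ?_⟩
  rintro r ⟨μ, hμ, rfl⟩
  rcases (hspec μ).1 hμ with rfl | rfl | rfl
  · simp
  · exact hnorm.le
  · exact (norm_conj _).trans hnorm |>.le

/-- The spectral radius (maximum modulus of the complex eigenvalues) of the Chambolle–Pock
matrix for two lines at angle `θ` with parameter `τ` equals `|cos θ|`, independently of `τ`. -/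
theorem stmt_16 (τ θ : ℝ) (hτ : 0 < τ) (hθ : θ ∈ Set.Ico 0 Real.pi) :
    IsGreatest {r : ℝ | ∃ μ ∈ spectrum ℂ
        ((!![1, 0, -1/τ, 0;
             0, 0, 0, 0;
             τ * Real.sin θ ^ 2, τ * Real.cos θ * Real.sin θ,
               -(Real.sin θ ^ 2), -(Real.cos θ * Real.sin θ);
             -(τ * Real.cos θ * Real.sin θ), -(τ * Real.cos θ ^ 2),
               Real.cos θ * Real.sin θ, Real.cos θ ^ 2] :
            Matrix (Fin 4) (Fin 4) ℝ).map Complex.ofReal),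
        r = ‖μ‖}
      |Real.cos θ| :=
  stmt_16_general τ θ hτ
end

section
/- Let τ > 0 and θ ∈ [0, π), and let T be the real 4×4 matrix with rows: (1, 0, −1/τ, 0); (0, 0, 0, 0); (τ sin²θ, τ cosθ sinθ, −sin²θ, −cosθ sinθ); (−τ cosθ sinθ, −τ cos²θ, cosθ sinθ, cos²θ). Then the ℓ²-operator norm of T satisfies ‖T‖ = √( 1 + (1 + τ⁴ + (1 + τ²)·√(1 + τ⁴ − 2τ² cos(2θ)) ) / (2τ²) ). -/
open Real

lemma aux_norm4 (y : EuclideanSpace ℝ (Fin 4)) :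
    ‖y‖ ^ 2 = y 0 ^ 2 + y 1 ^ 2 + y 2 ^ 2 + y 3 ^ 2 := by
  rw [EuclideanSpace.norm_eq, Real.sq_sqrt (by positivity)]
  simp [Fin.sum_univ_four, sq_abs]

lemma aux_psd (a b d u1 u2 : ℝ) (ha : 0 ≤ a) (hd : 0 ≤ d) (had : a*d = b^2) :
    0 ≤ a*u1^2 - 2*b*u1*u2 + d*u2^2 := by
  rcases eq_or_lt_of_le ha with h|h
  · have hb : b = 0 := by nlinarith
    rw [hb, ← h]
    simpa using mul_nonneg hd (sq_nonneg u2)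
  · have h2 : (a*d - b^2)*u2^2 = 0 := by rw [had]; ring
    nlinarith [sq_nonneg (a*u1 - b*u2), h2, h]

set_option maxHeartbeats 2000000 in
/-- The Euclidean operator norm of the Chambolle–Pock matrix for two lines at angle `θ`
with parameter `τ`. -/
theorem stmt_17 (τ θ : ℝ) (hτ : 0 < τ) (hθ : θ ∈ Set.Ico 0 Real.pi) :
    ‖Matrix.toEuclideanCLM (𝕜 := ℝ) (n := Fin 4)
        (!![1, 0, -1/τ, 0;
            0, 0, 0, 0;
            τ * Real.sin θ ^ 2, τ * Real.cos θ * Real.sin θ,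
              -(Real.sin θ ^ 2), -(Real.cos θ * Real.sin θ);
            -(τ * Real.cos θ * Real.sin θ), -(τ * Real.cos θ ^ 2),
              Real.cos θ * Real.sin θ, Real.cos θ ^ 2] :
          Matrix (Fin 4) (Fin 4) ℝ)‖
      = Real.sqrt (1 + (1 + τ ^ 4 + (1 + τ ^ 2) *
          Real.sqrt (1 + τ ^ 4 - 2 * τ ^ 2 * Real.cos (2 * θ))) / (2 * τ ^ 2)) := by
  have hτ' : τ ≠ 0 := ne_of_gt hτ
  have hcos2 : Real.cos (2*θ) = 2 * Real.cos θ ^ 2 - 1 := Real.cos_two_mul θ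
  set s := Real.sin θ with hs
  set c := Real.cos θ with hc
  have hsc : s^2 + c^2 = 1 := Real.sin_sq_add_cos_sq θ
  set M : Matrix (Fin 4) (Fin 4) ℝ :=
    !![1, 0, -1/τ, 0;
       0, 0, 0, 0;
       τ * s ^ 2, τ * c * s, -(s ^ 2), -(c * s);
       -(τ * c * s), -(τ * c ^ 2), c * s, c ^ 2] with hM
  set T := Matrix.toEuclideanCLM (𝕜 := ℝ) (n := Fin 4) M with hT
  have harg : 0 ≤ (1+τ^2)^2 - 4*τ^2*c^2 := by nlinarith [sq_nonneg (1-τ^2), sq_nonneg (τ*s)]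
  set r := Real.sqrt ((1+τ^2)^2 - 4*τ^2*c^2) with hrdef
  have hr0 : 0 ≤ r := Real.sqrt_nonneg _
  have hr2 : r^2 = (1+τ^2)^2 - 4*τ^2*c^2 := Real.sq_sqrt harg
  -- PSD facts
  have hm2 : r^2 - (1 - τ^2 + 2*τ^2*s^2)^2 = (2*τ^2*s*c)^2 := by
    linear_combination hr2 - (4*τ^2 + 4*τ^4*s^2) * hsc
  have haa : 0 ≤ (r - (1 - τ^2 + 2*τ^2*s^2))/2 := by
    nlinarith [hm2, hr0, sq_nonneg (2*τ^2*s*c)]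
  have hdd : 0 ≤ (r + (1 - τ^2 + 2*τ^2*s^2))/2 := by
    nlinarith [hm2, hr0, sq_nonneg (2*τ^2*s*c)]
  have had : ((r - (1 - τ^2 + 2*τ^2*s^2))/2) * ((r + (1 - τ^2 + 2*τ^2*s^2))/2)
      = (τ^2*s*c)^2 := by linear_combination hm2/4
  have hlam0 : 0 ≤ ((1+τ^2)+r)/2 := by nlinarith [sq_nonneg τ]
  have hK0 : (0:ℝ) ≤ (1+1/τ^2) * (((1+τ^2)+r)/2) := by positivity
  -- the RHS equals sqrt K
  have hrhs : Real.sqrt (1 + (1 + τ ^ 4 + (1 + τ ^ 2) *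
        Real.sqrt (1 + τ ^ 4 - 2 * τ ^ 2 * Real.cos (2 * θ))) / (2 * τ ^ 2))
      = Real.sqrt ((1+1/τ^2) * (((1+τ^2)+r)/2)) := by
    have h1 : 1 + τ ^ 4 - 2 * τ ^ 2 * Real.cos (2 * θ) = (1+τ^2)^2 - 4*τ^2*c^2 := by
      rw [hcos2]; ring
    rw [h1, ← hrdef]
    congr 1
    field_simp
    ring
  rw [hrhs]
  -- apply formula
  have hTx : ∀ x : EuclideanSpace ℝ (Fin 4), ‖T x‖^2 =
      (x 0 - x 2/τ)^2 + τ^2*(s*(x 0 - x 2/τ) + c*(x 1 - x 3/τ))^2 := by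
    intro x
    have h0 : ∀ i, (T x) i = M.mulVec x i := fun i => rfl
    rw [aux_norm4 (T x), h0 0, h0 1, h0 2, h0 3]
    simp [hM, Matrix.mulVec, dotProduct, Fin.sum_univ_four]
    field_simp
    linear_combination (τ^2 * (s*(τ*x 0 - x 2) + c*(τ*x 1 - x 3))^2) * hsc
  -- key 2-variable inequality
  have key : ∀ u1 u2 : ℝ, u1^2 + τ^2*(s*u1 + c*u2)^2 ≤ (((1+τ^2)+r)/2)*(u1^2+u2^2) := by
    intro u1 u2
    have hexp : (((1+τ^2)+r)/2)*(u1^2+u2^2) - (u1^2 + τ^2*(s*u1 + c*u2)^2)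
        = ((r - (1 - τ^2 + 2*τ^2*s^2))/2) * u1^2 - 2*(τ^2*s*c)*u1*u2
          + ((r + (1 - τ^2 + 2*τ^2*s^2))/2) * u2^2 + (τ^2*u2^2) * (1 - s^2 - c^2) := by
      ring
    have h3 : (τ^2*u2^2)*(1 - s^2 - c^2) = 0 := by
      have : 1 - s^2 - c^2 = 0 := by linarith
      rw [this, mul_zero]
    have h4 := aux_psd ((r - (1 - τ^2 + 2*τ^2*s^2))/2) (τ^2*s*c)
      ((r + (1 - τ^2 + 2*τ^2*s^2))/2) u1 u2 haa hdd had
    linarith [hexp, h3, h4]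
  -- upper bound
  have hub : ‖T‖ ≤ Real.sqrt ((1+1/τ^2) * (((1+τ^2)+r)/2)) := by
    apply ContinuousLinearMap.opNorm_le_bound _ (Real.sqrt_nonneg _)
    intro x
    have h1 : ‖T x‖^2 ≤ ((1+1/τ^2) * (((1+τ^2)+r)/2)) * ‖x‖^2 := by
      rw [hTx x, aux_norm4 x]
      calc (x 0 - x 2/τ)^2 + τ^2*(s*(x 0 - x 2/τ) + c*(x 1 - x 3/τ))^2
          ≤ (((1+τ^2)+r)/2) * ((x 0 - x 2/τ)^2 + (x 1 - x 3/τ)^2) := key _ _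
        _ ≤ (((1+τ^2)+r)/2) * ((1+1/τ^2) * (x 0^2 + x 1^2 + x 2^2 + x 3^2)) := by
            apply mul_le_mul_of_nonneg_left _ hlam0
            have e1 : (x 0 - x 2/τ)^2 + (x 1 - x 3/τ)^2
                ≤ (1+1/τ^2) * (x 0^2 + x 1^2 + x 2^2 + x 3^2) := by
              have k1 : (1+1/τ^2) * (x 0^2 + x 1^2 + x 2^2 + x 3^2)
                  - ((x 0 - x 2/τ)^2 + (x 1 - x 3/τ)^2)
                  = (x 0/τ + x 2)^2 + (x 1/τ + x 3)^2 := by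
                field_simp
                ring
              linarith [k1, sq_nonneg (x 0/τ + x 2), sq_nonneg (x 1/τ + x 3)]
            exact e1
        _ = ((1+1/τ^2) * (((1+τ^2)+r)/2)) * (x 0^2 + x 1^2 + x 2^2 + x 3^2) := by ring
    calc ‖T x‖ = Real.sqrt (‖T x‖^2) := (Real.sqrt_sq (norm_nonneg _)).symm
      _ ≤ Real.sqrt (((1+1/τ^2) * (((1+τ^2)+r)/2)) * ‖x‖^2) := Real.sqrt_le_sqrt h1
      _ = Real.sqrt ((1+1/τ^2) * (((1+τ^2)+r)/2)) * ‖x‖ := by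
          rw [Real.sqrt_mul hK0, Real.sqrt_sq (norm_nonneg _)]
  -- lower bound via explicit witness
  have hlow : ∀ w1 w2 : ℝ, ¬(w1 = 0 ∧ w2 = 0) →
      w1^2 + τ^2*(s*w1 + c*w2)^2 = (((1+τ^2)+r)/2)*(w1^2+w2^2) →
      Real.sqrt ((1+1/τ^2) * (((1+τ^2)+r)/2)) ≤ ‖T‖ := by
    intro w1 w2 hw hQ
    set x : EuclideanSpace ℝ (Fin 4) :=
      (WithLp.equiv 2 (Fin 4 → ℝ)).symm ![w1, w2, -w1/τ, -w2/τ] with hx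
    have hx0 : x 0 = w1 := rfl
    have hx1 : x 1 = w2 := rfl
    have hx2 : x 2 = -w1/τ := rfl
    have hx3 : x 3 = -w2/τ := rfl
    have hnx : ‖x‖^2 = (1+1/τ^2)*(w1^2+w2^2) := by
      rw [aux_norm4 x, hx0, hx1, hx2, hx3]
      field_simp
      ring
    have hTx2 : ‖T x‖^2 = ((1+1/τ^2) * (((1+τ^2)+r)/2)) * ‖x‖^2 := by
      rw [hTx x, hx0, hx1, hx2, hx3, hnx]
      have hu1 : w1 - (-w1/τ)/τ = (1+1/τ^2)*w1 := by field_simp; ring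
      have hu2 : w2 - (-w2/τ)/τ = (1+1/τ^2)*w2 := by field_simp; ring
      rw [hu1, hu2]
      calc ((1+1/τ^2)*w1)^2 + τ^2*(s*((1+1/τ^2)*w1) + c*((1+1/τ^2)*w2))^2
          = (1+1/τ^2)^2 * (w1^2 + τ^2*(s*w1 + c*w2)^2) := by ring
        _ = (1+1/τ^2)^2 * ((((1+τ^2)+r)/2)*(w1^2+w2^2)) := by rw [hQ]
        _ = ((1+1/τ^2) * (((1+τ^2)+r)/2)) * ((1+1/τ^2)*(w1^2+w2^2)) := by ring
    have hw2 : 0 < w1^2 + w2^2 := by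
      rcases not_and_or.mp hw with h | h
      · have := sq_nonneg w2; have h1 : 0 < w1^2 := by positivity
        linarith
      · have := sq_nonneg w1; have h1 : 0 < w2^2 := by positivity
        linarith
    have hxpos : 0 < ‖x‖ := by
      have h1 : 0 < ‖x‖^2 := by
        rw [hnx]
        have : (0:ℝ) < 1 + 1/τ^2 := by positivity
        positivity
      nlinarith [norm_nonneg x]
    have hTxn : Real.sqrt ((1+1/τ^2) * (((1+τ^2)+r)/2)) * ‖x‖ = ‖T x‖ := by
      rw [show ‖T x‖ = Real.sqrt (‖T x‖^2) from (Real.sqrt_sq (norm_nonneg _)).symm,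
        hTx2, Real.sqrt_mul hK0, Real.sqrt_sq (norm_nonneg _)]
    have h2 := T.le_opNorm x
    rw [← hTxn] at h2
    exact le_of_mul_le_mul_right h2 hxpos
  have hlb : Real.sqrt ((1+1/τ^2) * (((1+τ^2)+r)/2)) ≤ ‖T‖ := by
    rcases eq_or_lt_of_le haa with hA | hA
    · refine hlow 1 0 (by simp) ?_
      linear_combination hA
    · refine hlow (τ^2*s*c) ((r - (1 - τ^2 + 2*τ^2*s^2))/2) (fun h => (ne_of_gt hA) h.2) ?_
      linear_combination (-((r - (1 - τ^2 + 2*τ^2*s^2))/2))*had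
        + (((r - (1 - τ^2 + 2*τ^2*s^2))/2)^2*τ^2)*hsc
  exact le_antisymm hub hlb
end

section
/- Let σ > 0 and τ > 0, let L be a real m×n matrix, and suppose Z is a real m×m matrix satisfying Z·Zᵀ = I_m − στ·L·Lᵀ. Define the real (n+m)×(n+m) block matrix C := [[ (1/√σ)·I_n, 0 ], [ −√σ·L, (1/√τ)·Z ]]. Then C·Cᵀ = M, where M is the block matrix [[ (1/σ)·I_n, −Lᵀ ], [ −L, (1/τ)·I_m ]]. -/
open Matrix

theorem fromBlocks_lowerTriangular_mul_transpose {R l o : Type*} [CommRing R]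
    [Fintype l] [Fintype o] [DecidableEq l] (a b c : R) (L : Matrix o l R) (Z : Matrix o o R) :
    fromBlocks (a • (1 : Matrix l l R)) 0 (-b • L) (c • Z) *
        (fromBlocks (a • (1 : Matrix l l R)) 0 (-b • L) (c • Z))ᵀ =
      fromBlocks ((a * a) • 1) (-(a * b) • Lᵀ) (-(a * b) • L)
        ((b * b) • (L * Lᵀ) + (c * c) • (Z * Zᵀ)) := by
  simp only [fromBlocks_transpose, fromBlocks_multiply, transpose_smul, transpose_one,
    transpose_zero, Matrix.smul_mul, Matrix.mul_smul, smul_smul, Matrix.one_mul, Matrix.mul_one,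
    Matrix.mul_zero, Matrix.zero_mul, smul_zero, add_zero, mul_neg, neg_mul, neg_neg,
    mul_comm b a]

/-- If `Z Zᵀ = I - στ L Lᵀ`, then the block matrix
`C = [[(1/√σ) I, 0], [-√σ L, (1/√τ) Z]]` factors the Chambolle–Pock preconditioner:
`C Cᵀ = [[(1/σ) I, -Lᵀ], [-L, (1/τ) I]]`. -/
theorem stmt_18 (m n : ℕ) (σ τ : ℝ) (hσ : 0 < σ) (hτ : 0 < τ)
    (L : Matrix (Fin m) (Fin n) ℝ) (Z : Matrix (Fin m) (Fin m) ℝ)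
    (hZ : Z * Zᵀ = 1 - (σ * τ) • (L * Lᵀ)) :
    Matrix.fromBlocks ((1 / Real.sqrt σ) • (1 : Matrix (Fin n) (Fin n) ℝ)) 0
        ((-Real.sqrt σ) • L) ((1 / Real.sqrt τ) • Z) *
      (Matrix.fromBlocks ((1 / Real.sqrt σ) • (1 : Matrix (Fin n) (Fin n) ℝ)) 0
        ((-Real.sqrt σ) • L) ((1 / Real.sqrt τ) • Z))ᵀ
      = Matrix.fromBlocks ((1 / σ) • (1 : Matrix (Fin n) (Fin n) ℝ)) (-Lᵀ) (-L)
          ((1 / τ) • (1 : Matrix (Fin m) (Fin m) ℝ)) := by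
  have hσσ : √σ * √σ = σ := Real.mul_self_sqrt hσ.le
  have hσ_inv : 1 / √σ * √σ = 1 := one_div_mul_cancel (Real.sqrt_pos.mpr hσ).ne'
  have hττ : 1 / √τ * (1 / √τ) = 1 / τ := by
    rw [one_div_mul_one_div, Real.mul_self_sqrt hτ.le]
  have hlowerRight : σ • (L * Lᵀ) + (1 / τ) • (1 - (σ * τ) • (L * Lᵀ)) =
      (1 / τ) • (1 : Matrix (Fin m) (Fin m) ℝ) := by
    rw [smul_sub, smul_smul, one_div_mul_eq_div, mul_div_cancel_right₀ σ hτ.ne', add_sub_cancel]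
  rw [fromBlocks_lowerTriangular_mul_transpose, hZ, hσ_inv, one_div_mul_one_div, hσσ, hττ,
    hlowerRight, neg_one_smul, neg_one_smul]
end

section
/- Let L be a real n×n matrix that is positive semidefinite and satisfies that I_n − L is positive semidefinite (equivalently, L is symmetric psd with ‖L‖ ≤ 1); note I_n + L is then also positive semidefinite. Let M be the 2n×2n block matrix [[ I_n, −L ], [ −L, I_n ]], let A := √(I_n − L) and B := √(I_n + L) denote the principal (positive semidefinite) square roots, and let W := (1/2)·[[ A + B, A − B ], [ A − B, A + B ]]. Then M is positive semidefinite, W is positive semidefinite, and W·W = M; that is, W is the principal square root of M. -/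
/-!
The block matrix `[[A + B, A - B], [A - B, A + B]]` equals
`[1, 1]ᴴ A [1, 1] + [1, -1]ᴴ B [1, -1]`, so it is psd whenever `A` and `B` are; and
`[[A + B, A - B], [A - B, A + B]]² = 2 [[A² + B², A² - B²], [A² - B², A² + B²]]`.
With `A² = 1 - L` and `B² = 1 + L` the right-hand side is `4 M`, and `M` itself is half the block
matrix built from the psd pair `1 - L`, `1 + L`.
-/

open Matrix
open scoped ComplexOrder

namespace Matrix

variable {m 𝕜 : Type*} [Fintype m] [RCLike 𝕜]

theorem PosSemidef.fromBlocks_self {A : Matrix m m 𝕜} (hA : A.PosSemidef) :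
    (fromBlocks A A A A).PosSemidef := by
  classical
  simpa [conjTranspose_fromCols_eq_fromRows_conjTranspose, fromRows_mul_fromCols] using
    hA.conjTranspose_mul_mul_same (fromCols 1 1 : Matrix m (m ⊕ m) 𝕜)

theorem PosSemidef.fromBlocks_self_neg {A : Matrix m m 𝕜} (hA : A.PosSemidef) :
    (fromBlocks A (-A) (-A) A).PosSemidef := by
  classical
  simpa [conjTranspose_fromCols_eq_fromRows_conjTranspose, fromRows_mul_fromCols] using
    hA.conjTranspose_mul_mul_same (fromCols 1 (-1) : Matrix m (m ⊕ m) 𝕜)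

theorem PosSemidef.fromBlocks_add_sub {A B : Matrix m m 𝕜} (hA : A.PosSemidef)
    (hB : B.PosSemidef) : (fromBlocks (A + B) (A - B) (A - B) (A + B)).PosSemidef := by
  have h : fromBlocks (A + B) (A - B) (A - B) (A + B) =
      fromBlocks A A A A + fromBlocks B (-B) (-B) B := by
    simp [fromBlocks_add, sub_eq_add_neg]
  exact h ▸ hA.fromBlocks_self.add hB.fromBlocks_self_neg

theorem half_smul_fromBlocks_add_sub_mul_self (A B : Matrix m m 𝕜) :
    ((2⁻¹ : 𝕜) • fromBlocks (A + B) (A - B) (A - B) (A + B)) *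
        ((2⁻¹ : 𝕜) • fromBlocks (A + B) (A - B) (A - B) (A + B)) =
      (2⁻¹ : 𝕜) • fromBlocks (A * A + B * B) (A * A - B * B) (A * A - B * B) (A * A + B * B) := by
  rw [smul_mul_smul_comm, fromBlocks_multiply, fromBlocks_smul, fromBlocks_smul]
  congr 1
  all_goals
    simp only [add_mul, mul_add, sub_mul, mul_sub]
    module

end Matrix

/-- For a symmetric psd matrix `L` with `I - L` psd: `I + L` is psd, the block matrix
`M = [[I, -L], [-L, I]]` is psd, and with `A, B` the principal square roots of `I - L` and
`I + L`, the psd matrix `W = (1/2)[[A+B, A-B], [A-B, A+B]]` satisfies `W W = M`, i.e. `W` is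
the principal square root of `M`. -/
theorem stmt_19 (n : ℕ) (L : Matrix (Fin n) (Fin n) ℝ)
    (hL : L.PosSemidef) (hIL : ((1 : Matrix (Fin n) (Fin n) ℝ) - L).PosSemidef) :
    ((1 : Matrix (Fin n) (Fin n) ℝ) + L).PosSemidef ∧
      (Matrix.fromBlocks (1 : Matrix (Fin n) (Fin n) ℝ) (-L) (-L)
        (1 : Matrix (Fin n) (Fin n) ℝ)).PosSemidef ∧
      ∀ A B : Matrix (Fin n) (Fin n) ℝ,
        A.PosSemidef → A * A = 1 - L → B.PosSemidef → B * B = 1 + L →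
          ((2⁻¹ : ℝ) • Matrix.fromBlocks (A + B) (A - B) (A - B) (A + B)).PosSemidef ∧
            ((2⁻¹ : ℝ) • Matrix.fromBlocks (A + B) (A - B) (A - B) (A + B)) *
                ((2⁻¹ : ℝ) • Matrix.fromBlocks (A + B) (A - B) (A - B) (A + B))
              = Matrix.fromBlocks (1 : Matrix (Fin n) (Fin n) ℝ) (-L) (-L)
                  (1 : Matrix (Fin n) (Fin n) ℝ) := by
  have hIpL : ((1 : Matrix (Fin n) (Fin n) ℝ) + L).PosSemidef := PosSemidef.one.add hL
  have hM : fromBlocks 1 (-L) (-L) 1 = (2⁻¹ : ℝ) • fromBlocks ((1 - L) + (1 + L))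
      ((1 - L) - (1 + L)) ((1 - L) - (1 + L)) ((1 - L) + (1 + L)) := by
    rw [fromBlocks_smul]
    congr 1 <;> module
  refine ⟨hIpL, hM ▸ (hIL.fromBlocks_add_sub hIpL).smul (by norm_num),
    fun A B hA hA2 hB hB2 => ⟨(hA.fromBlocks_add_sub hB).smul (by norm_num), ?_⟩⟩
  rw [half_smul_fromBlocks_add_sub_mul_self, hA2, hB2, hM]
end
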